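/- (KL property of the merit function.) Let ξ > 0 and λ > 0, let z̄ ∈ ℝ^d with x̄ := prox_{λφ}(z̄), and suppose F_nor(z̄) = 0. Suppose ψ satisfies the KL inequality at x̄ with desingularizing function s ↦ c·s^{1−θ} for some c > 0 and θ ∈ [0,1). Then, setting θ̂ := max{θ, 1/2} and ĉ := ((c(1−θ))^{1/θ̂} + ξλ/2)^{θ̂}, there exist η̂ ∈ (0,∞] and a neighborhood V of z̄ such that |H_ξ(z) − H_ξ(z̄)|^{θ̂} ≤ ĉ·‖F_nor(z)‖ for all z ∈ V with |H_ξ(z) − H_ξ(z̄)| < η̂. -/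

import Mathlib

/-!
Since `F_nor z̄ = 0`, `H_ξ z - H_ξ z̄` differs from `ψ(prox z) - ψ(prox z̄)` by `(ξλ/2)‖F_nor z‖²`.
The optimality condition of the proximal problem puts `(z - prox z)/λ` in `∂φ(prox z)`, so
`F_nor z ∈ ∇f(prox z) + ∂φ(prox z)`, and since `prox` is nonexpansive the KL inequality at
`prox z̄` applies near `z̄`: `|ψ(prox z) - ψ(prox z̄)| ≤ (c(1-θ)‖F_nor z‖)^(1/θ̂)`. As `θ̂ ≥ 1/2`,
for `‖F_nor z‖ ≤ 1` also `‖F_nor z‖² ≤ ‖F_nor z‖^(1/θ̂)`; adding the two estimates and raising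
to the power `θ̂` gives the claim.
-/

open MeasureTheory Filter Real Set Topology
open scoped ENNReal NNReal

variable {d : ℕ}

local notation "E" => EuclideanSpace ℝ (Fin d)
local notation "⟪" x ", " y "⟫" => @inner ℝ _ _ x y

/-- The normal map `F_nor(z) = ∇f(prox z) + (z - prox z)/λ`. -/
noncomputable def Fnor (f' prox : E → E) (lam : ℝ) (z : E) : E :=
  f' (prox z) + lam⁻¹ • (z - prox z)

/-- The natural residual `F_nat(x) = x - prox(x - λ ∇f x)`. -/
noncomputable def Fnat (f' prox : E → E) (lam : ℝ) (x : E) : E :=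
  x - prox (x - lam • f' x)

/-- The convex subdifferential of an `EReal`-valued function. -/
def subdiff (φ : E → EReal) (x : E) : Set E :=
  {v : E | ∀ y : E, φ x + ((⟪v, y - x⟫ : ℝ) : EReal) ≤ φ y}

/-- The real value of `ψ = f + φ` (finite on the effective domain of `φ`). -/
noncomputable def psiR (f : E → ℝ) (φ : E → EReal) (x : E) : ℝ :=
  f x + (φ x).toReal

/-- The merit function `H_ξ(z) = ψ(prox z) + (ξ λ / 2) ‖F_nor z‖²`. -/
noncomputable def Hmer (f : E → ℝ) (φ : E → EReal) (f' prox : E → E) (lam ξ : ℝ) (z : E) : ℝ :=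
  psiR f φ (prox z) + ξ * lam / 2 * ‖Fnor f' prox lam z‖ ^ 2

/-- The KL inequality at `xbar` with desingularizing function `s ↦ c s^(1-θ)`. -/
def KLAt (f : E → ℝ) (f' : E → E) (φ : E → EReal) (c θ : ℝ) (xbar : E) : Prop :=
  ∃ η > (0 : ℝ), ∃ U ∈ nhds xbar, ∀ v ∈ U,
    0 < |psiR f φ v - psiR f φ xbar| → |psiR f φ v - psiR f φ xbar| < η →
      ∀ w ∈ subdiff φ v,
        1 ≤ c * (1 - θ) * |psiR f φ v - psiR f φ xbar| ^ (-θ) * ‖f' v + w‖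

def IsConvexEReal (φ : E → EReal) : Prop :=
  ∀ u v : E, ∀ a b : ℝ, 0 ≤ a → 0 ≤ b → a + b = 1 →
    φ (a • u + b • v) ≤ (a : EReal) * φ u + (b : EReal) * φ v

def IsProxMap (φ : E → EReal) (lam : ℝ) (prox : E → E) : Prop :=
  ∀ u v : E, φ (prox u) + ((‖u - prox u‖ ^ 2 / (2 * lam) : ℝ) : EReal)
    ≤ φ v + ((‖u - v‖ ^ 2 / (2 * lam) : ℝ) : EReal)

lemma le_of_forall_le_add_mul {a b c : ℝ} (h : ∀ t : ℝ, 0 < t → t ≤ 1 → a ≤ b + t * c) :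
    a ≤ b := by
  have hlim : Tendsto (fun t : ℝ => b + t * c) (𝓝[>] 0) (𝓝 b) := by
    have : Tendsto (fun t : ℝ => b + t * c) (𝓝 0) (𝓝 (b + 0 * c)) :=
      (continuous_const.add (continuous_id.mul continuous_const)).tendsto 0
    simpa using this.mono_left nhdsWithin_le_nhds
  refine ge_of_tendsto hlim ?_
  filter_upwards [Ioc_mem_nhdsGT one_pos] with t ht using h t ht.1 ht.2

lemma EReal.add_coe_le_iff_toReal {a b : EReal} (ha : a ≠ ⊤) (ha' : a ≠ ⊥) (hb : b ≠ ⊤)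
    (hb' : b ≠ ⊥) (r : ℝ) : a + r ≤ b ↔ a.toReal + r ≤ b.toReal := by
  rw [← EReal.coe_toReal ha ha', ← EReal.coe_toReal hb hb', ← EReal.coe_add,
    EReal.coe_le_coe_iff, EReal.toReal_coe, EReal.toReal_coe]

lemma mem_subdiff_iff_toReal {φ : E → EReal} (hbot : ∀ v, φ v ≠ ⊥) {x v : E} (hx : φ x ≠ ⊤) :
    v ∈ subdiff φ x ↔ ∀ y, φ y ≠ ⊤ → (φ x).toReal + ⟪v, y - x⟫ ≤ (φ y).toReal := by
  refine forall_congr' fun y => ?_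
  by_cases hy : φ y = ⊤
  · simp [hy]
  · simp only [hy, ne_eq, not_false_eq_true, forall_const]
    exact EReal.add_coe_le_iff_toReal hx (hbot x) hy (hbot y) _

lemma inner_sub_nonneg_of_mem_subdiff {φ : E → EReal} (hbot : ∀ v, φ v ≠ ⊥) {x y v w : E}
    (hx : φ x ≠ ⊤) (hy : φ y ≠ ⊤) (hv : v ∈ subdiff φ x) (hw : w ∈ subdiff φ y) :
    0 ≤ ⟪v - w, x - y⟫ := by
  have hxy := (mem_subdiff_iff_toReal hbot hx).1 hv y hy
  have hyx := (mem_subdiff_iff_toReal hbot hy).1 hw x hx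
  rw [← neg_sub x y, inner_neg_right] at hxy
  rw [inner_sub_left]
  linarith

lemma IsProxMap.ne_top {φ : E → EReal} {lam : ℝ} {prox : E → E} (hprox : IsProxMap φ lam prox)
    (hbot : ∀ v, φ v ≠ ⊥) (htop : ∃ v, φ v ≠ ⊤) (u : E) : φ (prox u) ≠ ⊤ := by
  obtain ⟨v, hv⟩ := htop
  intro hu
  have h := hprox u v
  rw [hu, EReal.top_add_coe, ← EReal.coe_toReal hv (hbot v), ← EReal.coe_add, top_le_iff] at h
  exact EReal.coe_ne_top _ h

lemma IsProxMap.mem_subdiff {φ : E → EReal} {lam : ℝ} {prox : E → E} (hprox : IsProxMap φ lam prox)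
    (hconv : IsConvexEReal φ) (hbot : ∀ v, φ v ≠ ⊥) (htop : ∃ v, φ v ≠ ⊤) (hlam : 0 < lam) (u : E) :
    lam⁻¹ • (u - prox u) ∈ subdiff φ (prox u) := by
  set x := prox u
  have hx : φ x ≠ ⊤ := hprox.ne_top hbot htop u
  rw [mem_subdiff_iff_toReal hbot hx]
  intro y hy
  set a := (φ x).toReal
  set b := (φ y).toReal
  -- compare `x` with the points `x + t (y - x)` of the segment towards `y`, and let `t → 0`
  have hsegment : ∀ t : ℝ, 0 < t → t ≤ 1 →
      ⟪u - x, y - x⟫ ≤ lam * (b - a) + t * (‖y - x‖ ^ 2 / 2) := by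
    intro t ht0 ht1
    have hconv_t : φ ((1 - t) • x + t • y) ≤ (((1 - t) * a + t * b : ℝ) : EReal) := by
      refine (hconv x y (1 - t) t (by linarith) ht0.le (by ring)).trans_eq ?_
      rw [← EReal.coe_toReal hx (hbot x), ← EReal.coe_toReal hy (hbot y)]
      norm_cast
    have h := (hprox u _).trans (add_le_add_left hconv_t _)
    rw [← EReal.coe_toReal hx (hbot x), ← EReal.coe_add, ← EReal.coe_add,
      EReal.coe_le_coe_iff] at h
    have hnorm : ‖u - ((1 - t) • x + t • y)‖ ^ 2
        = ‖u - x‖ ^ 2 - 2 * t * ⟪u - x, y - x⟫ + t ^ 2 * ‖y - x‖ ^ 2 := by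
      rw [show u - ((1 - t) • x + t • y) = (u - x) - t • (y - x) by module, norm_sub_sq_real,
        real_inner_smul_right, norm_smul, Real.norm_eq_abs, abs_of_pos ht0, mul_pow]
      ring
    rw [hnorm] at h
    have hscaled : t * ⟪u - x, y - x⟫ ≤ t * (lam * (b - a) + t * (‖y - x‖ ^ 2 / 2)) := by
      field_simp at h
      linarith
    exact le_of_mul_le_mul_left hscaled ht0
  have hinner : ⟪u - x, y - x⟫ ≤ lam * (b - a) := le_of_forall_le_add_mul hsegment
  rw [real_inner_smul_left]
  have : lam⁻¹ * ⟪u - x, y - x⟫ ≤ b - a := by rw [inv_mul_le_iff₀ hlam]; linarith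
  linarith

lemma IsProxMap.lipschitzWith_one {φ : E → EReal} {lam : ℝ} {prox : E → E}
    (hprox : IsProxMap φ lam prox) (hconv : IsConvexEReal φ) (hbot : ∀ v, φ v ≠ ⊥)
    (htop : ∃ v, φ v ≠ ⊤) (hlam : 0 < lam) : LipschitzWith 1 prox := by
  refine LipschitzWith.of_dist_le_mul fun u v => ?_
  rw [dist_eq_norm, dist_eq_norm, NNReal.coe_one, one_mul]
  -- monotonicity of `∂φ` gives `‖prox u - prox v‖² ≤ ⟪u - v, prox u - prox v⟫`
  have hmono := inner_sub_nonneg_of_mem_subdiff hbot (hprox.ne_top hbot htop u)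
    (hprox.ne_top hbot htop v) (hprox.mem_subdiff hconv hbot htop hlam u)
    (hprox.mem_subdiff hconv hbot htop hlam v)
  rw [← smul_sub, real_inner_smul_left, mul_nonneg_iff_of_pos_left (inv_pos.2 hlam),
    sub_sub_sub_comm, inner_sub_left, real_inner_self_eq_norm_sq, sub_nonneg] at hmono
  have hcs := real_inner_le_norm (u - v) (prox u - prox v)
  rcases (norm_nonneg (prox u - prox v)).eq_or_lt with h0 | hpos
  · rw [← h0]; exact norm_nonneg _
  · exact le_of_mul_le_mul_right (by nlinarith) hpos

lemma continuous_Fnor {f' prox : E → E} (hf' : Continuous f') (hprox : Continuous prox)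
    (lam : ℝ) : Continuous (Fnor f' prox lam) := by
  unfold Fnor
  fun_prop

lemma Hmer_sub_Hmer_of_Fnor_eq_zero (f : E → ℝ) (φ : E → EReal) {f' prox : E → E} {lam : ℝ}
    (ξ : ℝ) {zbar : E} (hzero : Fnor f' prox lam zbar = 0) (z : E) :
    Hmer f φ f' prox lam ξ z - Hmer f φ f' prox lam ξ zbar =
      psiR f φ (prox z) - psiR f φ (prox zbar) + ξ * lam / 2 * ‖Fnor f' prox lam z‖ ^ 2 := by
  simp only [Hmer, hzero, norm_zero]
  ring

lemma rpow_le_mul_of_one_le_mul_rpow_neg_mul {Δ A F θ : ℝ} (hΔ : 0 < Δ)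
    (h : 1 ≤ A * Δ ^ (-θ) * F) : Δ ^ θ ≤ A * F := by
  have hpos := Real.rpow_pos_of_pos hΔ θ
  rw [Real.rpow_neg hΔ.le, mul_right_comm, ← div_eq_mul_inv, le_div_iff₀ hpos, one_mul] at h
  exact h

lemma rpow_le_of_le_add_mul_sq {D Δ A F κ θ : ℝ} (hD : 0 ≤ D) (hΔ : 0 ≤ Δ) (hA : 0 ≤ A)
    (hF : 0 ≤ F) (hF1 : F ≤ 1) (hκ : 0 ≤ κ) (hθ : 1 / 2 ≤ θ) (hΔF : Δ ^ θ ≤ A * F)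
    (hDΔ : D ≤ Δ + κ * F ^ 2) : D ^ θ ≤ (A ^ (1 / θ) + κ) ^ θ * F := by
  have hθpos : 0 < θ := by linarith
  have hΔle : Δ ≤ A ^ (1 / θ) * F ^ (1 / θ) := by
    rw [← Real.mul_rpow hA hF, one_div]
    exact (Real.le_rpow_inv_iff_of_pos hΔ (mul_nonneg hA hF) hθpos).2 hΔF
  have hFsq : F ^ 2 ≤ F ^ (1 / θ) := by
    rw [← Real.rpow_natCast]
    refine Real.rpow_le_rpow_of_exponent_ge' hF hF1 (by positivity) ?_
    rw [div_le_iff₀ hθpos]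
    push_cast
    linarith
  have hDle : D ≤ (A ^ (1 / θ) + κ) * F ^ (1 / θ) := by
    nlinarith [mul_le_mul_of_nonneg_left hFsq hκ]
  calc D ^ θ ≤ ((A ^ (1 / θ) + κ) * F ^ (1 / θ)) ^ θ := Real.rpow_le_rpow hD hDle hθpos.le
    _ = (A ^ (1 / θ) + κ) ^ θ * F := by
      rw [Real.mul_rpow (by positivity) (by positivity), ← Real.rpow_mul hF,
        one_div_mul_cancel hθpos.ne', Real.rpow_one]

lemma KLAt.eventually_rpow_le {f : E → ℝ} {f' : E → E} {φ : E → EReal} {c θ θ' : ℝ} {xbar : E}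
    (hKL : KLAt f f' φ c θ xbar) (hA : 0 ≤ c * (1 - θ)) (hθθ' : θ ≤ θ') (hθ' : 0 < θ') :
    ∃ η > (0 : ℝ), ∀ᶠ x in 𝓝 xbar, ∀ v ∈ subdiff φ x, |psiR f φ x - psiR f φ xbar| < η →
      |psiR f φ x - psiR f φ xbar| ^ θ' ≤ c * (1 - θ) * ‖f' x + v‖ := by
  obtain ⟨η, hη, U, hU, hKLU⟩ := hKL
  refine ⟨min η 1, lt_min hη one_pos, ?_⟩
  filter_upwards [hU] with x hx v hv hsmall
  rcases (abs_nonneg (psiR f φ x - psiR f φ xbar)).eq_or_lt with h0 | hpos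
  · rw [← h0, Real.zero_rpow hθ'.ne']
    positivity
  · exact (Real.rpow_le_rpow_of_exponent_ge hpos (hsmall.le.trans (min_le_right _ _)) hθθ').trans
      (rpow_le_mul_of_one_le_mul_rpow_neg_mul hpos
        (hKLU x hx hpos (hsmall.trans_le (min_le_left _ _)) v hv))

theorem stmt11_general
    (f : E → ℝ) (f' : E → E) (φ : E → EReal) (prox : E → E) (lam : ℝ)
    (hlam : 0 < lam)
    (hf'cont : Continuous f')
    (hφconv : ∀ u v : E, ∀ a b : ℝ, 0 ≤ a → 0 ≤ b → a + b = 1 →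
      φ (a • u + b • v) ≤ (a : EReal) * φ u + (b : EReal) * φ v)
    (hφnebot : ∀ v : E, φ v ≠ ⊥) (hφnetop : ∃ v : E, φ v ≠ ⊤)
    (hprox : ∀ u v : E,
      φ (prox u) + ((‖u - prox u‖ ^ 2 / (2 * lam) : ℝ) : EReal)
        ≤ φ v + ((‖u - v‖ ^ 2 / (2 * lam) : ℝ) : EReal))
    (ξ : ℝ) (hξ : 0 < ξ)
    (zbar : E) (hzero : Fnor f' prox lam zbar = 0)
    (c θ : ℝ) (hc : 0 < c) (hθ : θ ∈ Set.Ico (0 : ℝ) 1)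
    (hKL : KLAt f f' φ c θ (prox zbar)) :
    ∀ θhat chat : ℝ,
      θhat = max θ (1 / 2) →
      chat = ((c * (1 - θ)) ^ (1 / θhat) + ξ * lam / 2) ^ θhat →
      ∃ ηhat > (0 : ℝ), ∃ V ∈ nhds zbar, ∀ w ∈ V,
        |Hmer f φ f' prox lam ξ w - Hmer f φ f' prox lam ξ zbar| < ηhat →
          |Hmer f φ f' prox lam ξ w - Hmer f φ f' prox lam ξ zbar| ^ θhat ≤
            chat * ‖Fnor f' prox lam w‖ := by
  intro θhat chat hθhat hchat
  have hA : 0 ≤ c * (1 - θ) := mul_nonneg hc.le (sub_nonneg.2 hθ.2.le)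
  obtain ⟨η, hη, hKLnear⟩ := hKL.eventually_rpow_le hA (hθhat ▸ le_max_left _ _)
    (hθhat ▸ lt_max_of_lt_right one_half_pos)
  have hproxLip := IsProxMap.lipschitzWith_one hprox hφconv hφnebot hφnetop hlam
  have hFlim : Tendsto (fun z => ‖Fnor f' prox lam z‖) (𝓝 zbar) (𝓝 0) := by
    simpa [hzero] using (continuous_Fnor hf'cont hproxLip.continuous lam).norm.tendsto zbar
  have hsq_lim : Tendsto (fun z => ξ * lam / 2 * ‖Fnor f' prox lam z‖ ^ 2) (𝓝 zbar) (𝓝 0) := by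
    simpa using (hFlim.pow 2).const_mul (ξ * lam / 2)
  obtain ⟨V, hV, hVnear⟩ := ((hproxLip.continuous.tendsto zbar).eventually hKLnear).and
    ((hFlim.eventually_lt_const one_pos).and (hsq_lim.eventually_lt_const (half_pos hη)))
    |>.exists_mem
  refine ⟨η / 2, half_pos hη, V, hV, fun z hz hHz => ?_⟩
  obtain ⟨hKLz, hF1, hq_small⟩ := hVnear z hz
  have hdiff := Hmer_sub_Hmer_of_Fnor_eq_zero f φ ξ hzero z
  have hq : 0 ≤ ξ * lam / 2 * ‖Fnor f' prox lam z‖ ^ 2 := by positivity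
  set q := ξ * lam / 2 * ‖Fnor f' prox lam z‖ ^ 2
  set P := psiR f φ (prox z) - psiR f φ (prox zbar)
  have hHP : |P + q| ≤ |P| + q := (abs_add_le P q).trans_eq (by rw [abs_of_nonneg hq])
  have hPH : |P| ≤ |P + q| + q := by simpa [abs_of_nonneg hq] using abs_sub (P + q) q
  rw [← hdiff] at hHP hPH
  rw [hchat]
  exact rpow_le_of_le_add_mul_sq (abs_nonneg _) (abs_nonneg P) hA (norm_nonneg _) hF1.le
    (by positivity) (hθhat ▸ le_max_right _ _)
    (hKLz _ (IsProxMap.mem_subdiff hprox hφconv hφnebot hφnetop hlam z) (by linarith)) hHP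

/-- KL-type property of the merit function `H_ξ`. -/
theorem stmt11
    (f : E → ℝ) (f' : E → E) (φ : E → EReal) (prox : E → E) (lam : ℝ)
    (hlam : 0 < lam)
    (hf : ∀ v : E, HasGradientAt f (f' v) v) (hf'cont : Continuous f')
    (hφconv : ∀ u v : E, ∀ a b : ℝ, 0 ≤ a → 0 ≤ b → a + b = 1 →
      φ (a • u + b • v) ≤ (a : EReal) * φ u + (b : EReal) * φ v)
    (hφlsc : LowerSemicontinuous φ)
    (hφnebot : ∀ v : E, φ v ≠ ⊥) (hφnetop : ∃ v : E, φ v ≠ ⊤)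
    (hprox : ∀ u v : E,
      φ (prox u) + ((‖u - prox u‖ ^ 2 / (2 * lam) : ℝ) : EReal)
        ≤ φ v + ((‖u - v‖ ^ 2 / (2 * lam) : ℝ) : EReal))
    (ξ : ℝ) (hξ : 0 < ξ)
    (zbar : E) (hzero : Fnor f' prox lam zbar = 0)
    (c θ : ℝ) (hc : 0 < c) (hθ : θ ∈ Set.Ico (0 : ℝ) 1)
    (hKL : KLAt f f' φ c θ (prox zbar)) :
    ∀ θhat chat : ℝ,
      θhat = max θ (1 / 2) →
      chat = ((c * (1 - θ)) ^ (1 / θhat) + ξ * lam / 2) ^ θhat →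
      ∃ ηhat > (0 : ℝ), ∃ V ∈ nhds zbar, ∀ w ∈ V,
        |Hmer f φ f' prox lam ξ w - Hmer f φ f' prox lam ξ zbar| < ηhat →
          |Hmer f φ f' prox lam ξ w - Hmer f φ f' prox lam ξ zbar| ^ θhat ≤
            chat * ‖Fnor f' prox lam w‖ :=
  stmt11_general f f' φ prox lam hlam hf'cont hφconv hφnebot hφnetop hprox ξ hξ zbar hzero c θ hc hθ
    hKL
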